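/- arXiv:1905.09620 — 2 statements merged into one kernel-verified Lean document; each statement's English description precedes it below -/
import Mathlib

section
/- Let (∂ : I → H, ▷_ρ) be a crossed module of cocommutative Hopf algebras, where ∂ is a Hopf algebra map and ▷_ρ is an action of H on I making I an H-module bialgebra, satisfying ∂(x ▷_ρ v) = x ▷_ad ∂(v) and ∂(u) ▷_ρ v = u ▷_ad v. If g ∈ Gl(H) and e ∈ Gl(I), then g ▷_ρ e ∈ Gl(I), ∂(g ▷_ρ e) = g ∂(e) g⁻¹, and ∂(e) ▷_ρ f = e f e⁻¹ for all f ∈ Gl(I). Hence Gl(∂) : Gl(I) → Gl(H) with the induced action is a crossed module of groups. -/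
open TensorProduct

/-- Building block for the adjoint action: sends `a ⊗ b` to the map `y ↦ a * y * S(b)`. -/
noncomputable def adT (K H : Type*) [CommRing K] [Ring H] [HopfAlgebra K H] :
    H ⊗[K] H →ₗ[K] H →ₗ[K] H :=
  TensorProduct.lift (LinearMap.mk₂ K
    (fun a b => LinearMap.mulRight K (HopfAlgebra.antipode (R := K) b) ∘ₗ LinearMap.mulLeft K a)
    (fun a a' b => by ext y; simp [add_mul])
    (fun c a b => by ext y; simp [smul_mul_assoc])
    (fun a b b' => by ext y; simp [map_add, mul_add])
    (fun c a b => by ext y; simp [map_smul, mul_smul_comm]))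

/-- The adjoint action `x ▷_ad y = Σ_(x) x' * y * S(x'')` (Sweedler notation). -/
noncomputable def adAct {K H : Type*} [CommRing K] [Ring H] [HopfAlgebra K H] (x y : H) : H :=
  adT K H (Coalgebra.comul x) y

/-- The adjoint action as a bilinear map. -/
noncomputable def adB (K H : Type*) [CommRing K] [Ring H] [HopfAlgebra K H] :
    H →ₗ[K] H →ₗ[K] H :=
  adT K H ∘ₗ Coalgebra.comul

/-- `x` is group-like: `δ(x) = x ⊗ x` and `ε(x) = 1`. -/
def IsGroupLike (K : Type*) {H : Type*} [CommRing K] [Ring H] [HopfAlgebra K H] (x : H) : Prop :=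
  Coalgebra.comul (R := K) x = x ⊗ₜ[K] x ∧ Coalgebra.counit (R := K) x = 1

/-- `x` is primitive: `δ(x) = x ⊗ 1 + 1 ⊗ x`. -/
def IsPrimitive (K : Type*) {H : Type*} [CommRing K] [Ring H] [HopfAlgebra K H] (x : H) : Prop :=
  Coalgebra.comul (R := K) x = x ⊗ₜ[K] (1 : H) + (1 : H) ⊗ₜ[K] x

/-- Cocommutativity of a Hopf algebra: `τ ∘ δ = δ`. -/
def IsCocomm (K H : Type*) [CommRing K] [Ring H] [HopfAlgebra K H] : Prop :=
  ∀ x : H, (TensorProduct.comm K H H) (Coalgebra.comul x) = Coalgebra.comul x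

/-- The Hopf kernel of a Hopf algebra morphism: `{x : Σ x' ⊗ f(x'') = x ⊗ 1}`. -/
noncomputable def HKer {K A B : Type*} [CommRing K] [Ring A] [Ring B]
    [HopfAlgebra K A] [HopfAlgebra K B] (f : A →ₐc[K] B) : Set A :=
  {x : A | TensorProduct.map (LinearMap.id : A →ₗ[K] A) f.toLinearMap
      (Coalgebra.comul x) = x ⊗ₜ[K] (1 : B)}

/-! For a group-like `x`, `δ x = x ⊗ x`, so the adjoint action of `x` collapses to conjugation
`y ↦ x * y * S x`; this turns equivariance and the Peiffer condition into their group form.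
Likewise the module-coalgebra axioms compute `δ (g ▷ e)` from `δ g = g ⊗ g` and `δ e = e ⊗ e`. -/

section

variable {K H I : Type*} [CommRing K] [Ring H] [Ring I] [HopfAlgebra K H] [HopfAlgebra K I]

theorem adAct_of_isGroupLike {x : H} (hx : IsGroupLike K x) (y : H) :
    adAct (K := K) x y = x * y * HopfAlgebra.antipode (R := K) x := by
  simp [adAct, adT, hx.1]

theorem IsGroupLike.act {ρ : H →ₗ[K] I →ₗ[K] I}
    (h_comul : ∀ (x : H) (v : I), Coalgebra.comul (R := K) (ρ x v) =
      TensorProduct.map (TensorProduct.lift ρ) (TensorProduct.lift ρ)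
        ((TensorProduct.tensorTensorTensorComm K H H I I)
          (Coalgebra.comul x ⊗ₜ[K] Coalgebra.comul v)))
    (h_counit : ∀ (x : H) (v : I), Coalgebra.counit (R := K) (ρ x v) =
      Coalgebra.counit (R := K) x * Coalgebra.counit (R := K) v)
    {g : H} {e : I} (hg : IsGroupLike K g) (he : IsGroupLike K e) : IsGroupLike K (ρ g e) := by
  constructor
  · rw [h_comul, hg.1, he.1, TensorProduct.tensorTensorTensorComm_tmul]
    rfl
  · rw [h_counit, hg.2, he.2, one_mul]

end

theorem grouplike_crossed_module_general (K H I : Type*) [Field K] [Ring H] [Ring I]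
    [HopfAlgebra K H] [HopfAlgebra K I]
    (del : I →ₐc[K] H) (ρ : H →ₗ[K] I →ₗ[K] I)
    -- `I` is an `H`-module coalgebra
    (h_comul : ∀ (x : H) (v : I), Coalgebra.comul (R := K) (ρ x v) =
      TensorProduct.map (TensorProduct.lift ρ) (TensorProduct.lift ρ)
        ((TensorProduct.tensorTensorTensorComm K H H I I)
          (Coalgebra.comul x ⊗ₜ[K] Coalgebra.comul v)))
    (h_counit : ∀ (x : H) (v : I), Coalgebra.counit (R := K) (ρ x v) =
      Coalgebra.counit (R := K) x * Coalgebra.counit (R := K) v)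
    -- equivariance and the Peiffer condition
    (h_equiv : ∀ (x : H) (v : I), del (ρ x v) = adAct (K := K) x (del v))
    (h_peiffer : ∀ u v : I, ρ (del u) v = adAct (K := K) u v)
    (g : H) (e : I) (hg : IsGroupLike K g) (he : IsGroupLike K e) :
    IsGroupLike K (ρ g e) ∧
    del (ρ g e) = g * del e * HopfAlgebra.antipode (R := K) g ∧
    (∀ f : I, IsGroupLike K f → ρ (del e) f = e * f * HopfAlgebra.antipode (R := K) e) :=
  ⟨hg.act h_comul h_counit he, by rw [h_equiv, adAct_of_isGroupLike hg],
    fun f _ => by rw [h_peiffer, adAct_of_isGroupLike he]⟩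

/-- the group-like elements of a crossed module of cocommutative Hopf
algebras form a crossed module of groups: the action preserves group-likes and the
equivariance and Peiffer conditions take their group-theoretic form (with inverses
given by the antipode). -/
theorem grouplike_crossed_module (K H I : Type*) [Field K] [Ring H] [Ring I]
    [HopfAlgebra K H] [HopfAlgebra K I] (hH : IsCocomm K H) (hI : IsCocomm K I)
    (del : I →ₐc[K] H) (ρ : H →ₗ[K] I →ₗ[K] I)
    -- `ρ` is an action of `H` on `I`
    (h_one : ∀ v : I, ρ 1 v = v)
    (h_mul : ∀ (x y : H) (v : I), ρ (x * y) v = ρ x (ρ y v))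
    -- `I` is an `H`-module algebra
    (h_alg_one : ∀ x : H, ρ x 1 = Coalgebra.counit (R := K) x • (1 : I))
    (h_alg_mul : ∀ (x : H) (u v : I), ρ x (u * v) =
      LinearMap.mul' K I (TensorProduct.map (ρ.flip u) (ρ.flip v) (Coalgebra.comul x)))
    -- `I` is an `H`-module coalgebra
    (h_comul : ∀ (x : H) (v : I), Coalgebra.comul (R := K) (ρ x v) =
      TensorProduct.map (TensorProduct.lift ρ) (TensorProduct.lift ρ)
        ((TensorProduct.tensorTensorTensorComm K H H I I)
          (Coalgebra.comul x ⊗ₜ[K] Coalgebra.comul v)))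
    (h_counit : ∀ (x : H) (v : I), Coalgebra.counit (R := K) (ρ x v) =
      Coalgebra.counit (R := K) x * Coalgebra.counit (R := K) v)
    -- equivariance and the Peiffer condition
    (h_equiv : ∀ (x : H) (v : I), del (ρ x v) = adAct (K := K) x (del v))
    (h_peiffer : ∀ u v : I, ρ (del u) v = adAct (K := K) u v)
    (g : H) (e : I) (hg : IsGroupLike K g) (he : IsGroupLike K e) :
    IsGroupLike K (ρ g e) ∧
    del (ρ g e) = g * del e * HopfAlgebra.antipode (R := K) g ∧
    (∀ f : I, IsGroupLike K f → ρ (del e) f = e * f * HopfAlgebra.antipode (R := K) e) :=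
  grouplike_crossed_module_general K H I del ρ h_comul h_counit h_equiv h_peiffer g e hg he
end

section
/- Let (∂ : I → H, ▷_ρ) be a crossed module of cocommutative Hopf algebras. If x ∈ Prim(H) and v ∈ Prim(I), then x ▷_ρ v ∈ Prim(I), ∂(x ▷_ρ v) = [x, ∂(v)], and ∂(u) ▷_ρ v = [u,v] for all u,v ∈ Prim(I). Hence Prim(∂) : Prim(I) → Prim(H) with the induced action is a crossed module (differential crossed module) of Lie algebras. -/
open TensorProduct

/-! The antipode of a primitive element `x` is `-x`, because `ε(x) = 0`; hence the adjoint
action of `x` is the commutator `[x, -]`, which turns the equivariance and Peiffer identities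
into their Lie-algebra form. The action preserves primitives because in the Sweedler expansion
of `δ(x ▷ v)` the two cross terms contain `x ▷ 1 = ε(x) 1 = 0`. -/

namespace IsPrimitive

variable {R A : Type*} [CommRing R] [Ring A] [HopfAlgebra R A] {x : A}

theorem counit_eq_zero (hx : IsPrimitive R x) : Coalgebra.counit (R := R) x = 0 := by
  have h := Coalgebra.rTensor_counit_comul (R := R) x
  rw [hx, map_add, LinearMap.rTensor_tmul, LinearMap.rTensor_tmul, Bialgebra.counit_one,
    add_eq_right] at h
  have h1 : Coalgebra.counit (R := R) x • (1 : A) = 0 := by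
    simpa using congrArg (TensorProduct.lid R A) h
  simpa using congrArg (Coalgebra.counit (R := R)) h1

theorem antipode_eq_neg (hx : IsPrimitive R x) : HopfAlgebra.antipode R x = -x := by
  have h := HopfAlgebra.mul_antipode_rTensor_comul_apply (R := R) x
  rw [hx, hx.counit_eq_zero, map_add] at h
  simp only [map_add, LinearMap.rTensor_tmul, LinearMap.mul'_apply, HopfAlgebra.antipode_one,
    mul_one, one_mul, map_zero] at h
  exact eq_neg_of_add_eq_zero_left h

theorem adAct_eq (hx : IsPrimitive R x) (y : A) : adAct (K := R) x y = x * y - y * x := by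
  rw [adAct, hx, map_add]
  simp only [adT, TensorProduct.lift.tmul, LinearMap.mk₂_apply, LinearMap.add_apply,
    LinearMap.coe_comp, Function.comp_apply, LinearMap.mulLeft_apply, LinearMap.mulRight_apply,
    HopfAlgebra.antipode_one, hx.antipode_eq_neg]
  noncomm_ring

theorem act {H I : Type*} [Ring H] [Ring I] [HopfAlgebra R H] [HopfAlgebra R I]
    (ρ : H →ₗ[R] I →ₗ[R] I) (h_one : ∀ v : I, ρ 1 v = v)
    (h_alg_one : ∀ x : H, ρ x 1 = Coalgebra.counit (R := R) x • (1 : I))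
    (h_comul : ∀ (x : H) (v : I), Coalgebra.comul (R := R) (ρ x v) =
      TensorProduct.map (TensorProduct.lift ρ) (TensorProduct.lift ρ)
        ((TensorProduct.tensorTensorTensorComm R H H I I)
          (Coalgebra.comul x ⊗ₜ[R] Coalgebra.comul v)))
    {x : H} {v : I} (hx : IsPrimitive R x) (hv : IsPrimitive R v) : IsPrimitive R (ρ x v) := by
  rw [IsPrimitive, h_comul, hx, hv]
  simp only [TensorProduct.add_tmul, TensorProduct.tmul_add, map_add,
    TensorProduct.tensorTensorTensorComm_tmul, TensorProduct.map_tmul,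
    TensorProduct.lift.tmul, h_one, h_alg_one, hx.counit_eq_zero, zero_smul,
    TensorProduct.zero_tmul, TensorProduct.tmul_zero, add_zero, zero_add]

end IsPrimitive

theorem primitive_crossed_module_general (K H I : Type*) [Field K] [Ring H] [Ring I]
    [HopfAlgebra K H] [HopfAlgebra K I]
    (del : I →ₐc[K] H) (ρ : H →ₗ[K] I →ₗ[K] I)
    -- `ρ` is an action of `H` on `I`
    (h_one : ∀ v : I, ρ 1 v = v)
    -- `I` is an `H`-module algebra
    (h_alg_one : ∀ x : H, ρ x 1 = Coalgebra.counit (R := K) x • (1 : I))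
    -- `I` is an `H`-module coalgebra
    (h_comul : ∀ (x : H) (v : I), Coalgebra.comul (R := K) (ρ x v) =
      TensorProduct.map (TensorProduct.lift ρ) (TensorProduct.lift ρ)
        ((TensorProduct.tensorTensorTensorComm K H H I I)
          (Coalgebra.comul x ⊗ₜ[K] Coalgebra.comul v)))
    -- equivariance and the Peiffer condition
    (h_equiv : ∀ (x : H) (v : I), del (ρ x v) = adAct (K := K) x (del v))
    (h_peiffer : ∀ u v : I, ρ (del u) v = adAct (K := K) u v)
    (x : H) (v : I) (hx : IsPrimitive K x) (hv : IsPrimitive K v) :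
    IsPrimitive K (ρ x v) ∧
    del (ρ x v) = x * del v - del v * x ∧
    (∀ u w : I, IsPrimitive K u → IsPrimitive K w → ρ (del u) w = u * w - w * u) := by
  refine ⟨hx.act ρ h_one h_alg_one h_comul hv, by rw [h_equiv, hx.adAct_eq], ?_⟩
  intro u w hu _
  rw [h_peiffer, hu.adAct_eq]

/-- the primitive elements of a crossed module of cocommutative Hopf
algebras form a crossed module (differential crossed module) of Lie algebras: the action
preserves primitives and the equivariance and Peiffer conditions take their
Lie-theoretic (commutator bracket) form. -/
theorem primitive_crossed_module (K H I : Type*) [Field K] [Ring H] [Ring I]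
    [HopfAlgebra K H] [HopfAlgebra K I] (hH : IsCocomm K H) (hI : IsCocomm K I)
    (del : I →ₐc[K] H) (ρ : H →ₗ[K] I →ₗ[K] I)
    -- `ρ` is an action of `H` on `I`
    (h_one : ∀ v : I, ρ 1 v = v)
    (h_mul : ∀ (x y : H) (v : I), ρ (x * y) v = ρ x (ρ y v))
    -- `I` is an `H`-module algebra
    (h_alg_one : ∀ x : H, ρ x 1 = Coalgebra.counit (R := K) x • (1 : I))
    (h_alg_mul : ∀ (x : H) (u v : I), ρ x (u * v) =
      LinearMap.mul' K I (TensorProduct.map (ρ.flip u) (ρ.flip v) (Coalgebra.comul x)))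
    -- `I` is an `H`-module coalgebra
    (h_comul : ∀ (x : H) (v : I), Coalgebra.comul (R := K) (ρ x v) =
      TensorProduct.map (TensorProduct.lift ρ) (TensorProduct.lift ρ)
        ((TensorProduct.tensorTensorTensorComm K H H I I)
          (Coalgebra.comul x ⊗ₜ[K] Coalgebra.comul v)))
    (h_counit : ∀ (x : H) (v : I), Coalgebra.counit (R := K) (ρ x v) =
      Coalgebra.counit (R := K) x * Coalgebra.counit (R := K) v)
    -- equivariance and the Peiffer condition
    (h_equiv : ∀ (x : H) (v : I), del (ρ x v) = adAct (K := K) x (del v))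
    (h_peiffer : ∀ u v : I, ρ (del u) v = adAct (K := K) u v)
    (x : H) (v : I) (hx : IsPrimitive K x) (hv : IsPrimitive K v) :
    IsPrimitive K (ρ x v) ∧
    del (ρ x v) = x * del v - del v * x ∧
    (∀ u w : I, IsPrimitive K u → IsPrimitive K w → ρ (del u) w = u * w - w * u) :=
  primitive_crossed_module_general K H I del ρ h_one h_alg_one h_comul h_equiv h_peiffer x v hx hv
end
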